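/- arXiv:1905.10305 — 4 statements merged into one kernel-verified Lean document; each statement's English description precedes it below -/
import Mathlib

section
/- Let n ≥ 5 and let R be an algebraic curvature tensor on ℝⁿ with nonnegative isotropic curvature (weakly PIC), i.e. for every orthonormal 4-frame e₁,e₂,e₃,e₄ one has R₁₃₁₃ + R₁₄₁₄ + R₂₃₂₃ + R₂₄₂₄ − 2R₁₂₃₄ ≥ 0. Then every eigenvalue of the Ricci tensor of R is at most (1/2)·scal(R); equivalently, Ric_{nn} ≤ (1/2)scal for any orthonormal frame. -/
/- Common definitions: algebraic curvature tensors on ℝⁿ, represented by their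
components in an orthonormal frame. -/

noncomputable section
open Finset

/-- The space of (0,4)-tensors on ℝⁿ, given componentwise. -/
abbrev CT (n : ℕ) := Fin n → Fin n → Fin n → Fin n → ℝ

/-- `R` is an algebraic curvature tensor: the symmetries of a curvature tensor
together with the first Bianchi identity. -/
def IsAlgCurv {n : ℕ} (R : CT n) : Prop :=
  (∀ i j k l, R j i k l = - R i j k l) ∧
  (∀ i j k l, R i j l k = - R i j k l) ∧
  (∀ i j k l, R k l i j = R i j k l) ∧
  (∀ i j k l, R i j k l + R i k l j + R i l j k = 0)

/-- The Ricci tensor of `R` (trace). -/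
def Ricc {n : ℕ} (R : CT n) (j k : Fin n) : ℝ := ∑ i, R i j i k

/-- The scalar curvature of `R` (double trace). -/
def scalc {n : ℕ} (R : CT n) : ℝ := ∑ j, Ricc R j j

/-- Evaluation of the curvature tensor `R` on four vectors (by multilinearity). -/
def evR {n : ℕ} (R : CT n) (v₁ v₂ v₃ v₄ : EuclideanSpace ℝ (Fin n)) : ℝ :=
  ∑ i, ∑ j, ∑ k, ∑ l, v₁ i * v₂ j * v₃ k * v₄ l * R i j k l

/-- Evaluation of the Ricci tensor of `R` on two vectors. -/
def RicEv {n : ℕ} (R : CT n) (v w : EuclideanSpace ℝ (Fin n)) : ℝ :=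
  ∑ j, ∑ k, v j * w k * Ricc R j k

/-- An orthonormal `m`-frame in ℝⁿ. -/
def ONFrame {n m : ℕ} (e : Fin m → EuclideanSpace ℝ (Fin n)) : Prop :=
  ∀ i j, inner ℝ (e i) (e j) = (if i = j then 1 else 0 : ℝ)

/-- Nonnegative isotropic curvature (weakly PIC). -/
def WeaklyPIC {n : ℕ} (R : CT n) : Prop :=
  ∀ e : Fin 4 → EuclideanSpace ℝ (Fin n), ONFrame e →
    0 ≤ evR R (e 0) (e 2) (e 0) (e 2) + evR R (e 0) (e 3) (e 0) (e 3) +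
        evR R (e 1) (e 2) (e 1) (e 2) + evR R (e 1) (e 3) (e 1) (e 3) -
        2 * evR R (e 0) (e 1) (e 2) (e 3)

/-- Weakly PIC1. -/
def WeaklyPIC1 {n : ℕ} (R : CT n) : Prop :=
  ∀ e : Fin 4 → EuclideanSpace ℝ (Fin n), ONFrame e → ∀ l ∈ Set.Icc (0:ℝ) 1,
    0 ≤ evR R (e 0) (e 2) (e 0) (e 2) + l^2 * evR R (e 0) (e 3) (e 0) (e 3) +
        evR R (e 1) (e 2) (e 1) (e 2) + l^2 * evR R (e 1) (e 3) (e 1) (e 3) -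
        2 * l * evR R (e 0) (e 1) (e 2) (e 3)

/-- Weakly PIC2. -/
def WeaklyPIC2 {n : ℕ} (R : CT n) : Prop :=
  ∀ e : Fin 4 → EuclideanSpace ℝ (Fin n), ONFrame e →
    ∀ l ∈ Set.Icc (0:ℝ) 1, ∀ m ∈ Set.Icc (0:ℝ) 1,
    0 ≤ evR R (e 0) (e 2) (e 0) (e 2) + l^2 * evR R (e 0) (e 3) (e 0) (e 3) +
        m^2 * evR R (e 1) (e 2) (e 1) (e 2) + l^2 * m^2 * evR R (e 1) (e 3) (e 1) (e 3) -
        2 * l * m * evR R (e 0) (e 1) (e 2) (e 3)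

/-- The curvature tensor `I` of the round sphere: `I_{ijkl} = δ_{ik}δ_{jl} - δ_{il}δ_{jk}`. -/
def Idt (n : ℕ) : CT n := fun i j k l =>
  (if i = k then (1:ℝ) else 0) * (if j = l then (1:ℝ) else 0) -
  (if i = l then (1:ℝ) else 0) * (if j = k then (1:ℝ) else 0)

/-- Hamilton's quadratic curvature term `Q(R)`. -/
def Qt {n : ℕ} (R : CT n) : CT n := fun i j k l =>
  ∑ p, ∑ q, (R i j p q * R k l p q + 2 * R i p k q * R j p l q - 2 * R i p l q * R j p k q)

/-- Uniformly PIC: `R - δ · scal(R) · I` has nonnegative isotropic curvature. -/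
def UnifPIC {n : ℕ} (δ : ℝ) (R : CT n) : Prop :=
  WeaklyPIC (fun i j k l => R i j k l - δ * scalc R * Idt n i j k l)

/-- Kulkarni–Nomizu product of two (0,2)-tensors. -/
def KN {n : ℕ} (A B : Fin n → Fin n → ℝ) : CT n := fun p q r s =>
  A p r * B q s - A p s * B q r - A q r * B p s + A q s * B p r

/-- Natural inner product on curvature tensors. -/
def ipCT {n : ℕ} (A B : CT n) : ℝ := ∑ i, ∑ j, ∑ k, ∑ l, A i j k l * B i j k l

/-- The tangent cone of a convex cone `C` at `R ∈ C`: the intersection of all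
supporting half-spaces of `C` whose boundary contains `R`. -/
def TConeCT {n : ℕ} (C : Set (CT n)) (R : CT n) : Set (CT n) :=
  {V | ∀ N : CT n, (∀ U ∈ C, 0 ≤ ipCT U N) → ipCT R N = 0 → 0 ≤ ipCT V N}

/-- Action of a matrix on curvature tensors (used for O(n)-invariance). -/
def rotCT {n : ℕ} (g : Matrix (Fin n) (Fin n) ℝ) (R : CT n) : CT n := fun i j k l =>
  ∑ p, ∑ q, ∑ r, ∑ s, g i p * g j q * g k r * g l s * R p q r s

open Finset
variable {n : ℕ}

lemma my_sum_out3 {ι M : Type*} [Fintype ι] [AddCommMonoid M] (f : ι → ι → ι → M) :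
    ∑ x : ι, ∑ k : ι, ∑ l : ι, f x k l = ∑ k : ι, ∑ l : ι, ∑ x : ι, f x k l := by
  rw [Finset.sum_comm]
  exact Finset.sum_congr rfl fun k _ => Finset.sum_comm

lemma my_sum_out5 {ι M : Type*} [Fintype ι] [AddCommMonoid M] (f : ι → ι → ι → ι → ι → M) :
    ∑ x : ι, ∑ i : ι, ∑ j : ι, ∑ k : ι, ∑ l : ι, f x i j k l
      = ∑ i : ι, ∑ j : ι, ∑ k : ι, ∑ l : ι, ∑ x : ι, f x i j k l := by
  rw [Finset.sum_comm]
  refine Finset.sum_congr rfl fun i _ => ?_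
  rw [Finset.sum_comm]
  refine Finset.sum_congr rfl fun j _ => ?_
  exact my_sum_out3 _

lemma my_sum_pairswap {ι M : Type*} [Fintype ι] [AddCommMonoid M] (f : ι → ι → ι → ι → M) :
    ∑ i : ι, ∑ j : ι, ∑ k : ι, ∑ l : ι, f i j k l
      = ∑ k : ι, ∑ l : ι, ∑ i : ι, ∑ j : ι, f i j k l := by
  rw [Finset.sum_congr rfl fun i (_ : i ∈ univ) => my_sum_out3 (f i)]
  exact my_sum_out3 _

lemma my_evR_swap12 (R : CT n) (h : ∀ i j k l, R j i k l = - R i j k l)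
    (x y z w : EuclideanSpace ℝ (Fin n)) : evR R y x z w = - evR R x y z w := by
  unfold evR
  rw [Finset.sum_comm, ← Finset.sum_neg_distrib]
  refine Finset.sum_congr rfl fun a _ => ?_
  rw [← Finset.sum_neg_distrib]
  refine Finset.sum_congr rfl fun b _ => ?_
  rw [← Finset.sum_neg_distrib]
  refine Finset.sum_congr rfl fun k _ => ?_
  rw [← Finset.sum_neg_distrib]
  refine Finset.sum_congr rfl fun l _ => ?_
  rw [h]; ring

lemma my_evR_pairswap (R : CT n) (h : ∀ i j k l, R k l i j = R i j k l)
    (x y z w : EuclideanSpace ℝ (Fin n)) : evR R z w x y = evR R x y z w := by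
  unfold evR
  rw [my_sum_pairswap (f := fun i j k l => z i * w j * x k * y l * R i j k l)]
  refine Finset.sum_congr rfl fun a _ => Finset.sum_congr rfl fun b _ =>
    Finset.sum_congr rfl fun c _ => Finset.sum_congr rfl fun d _ => ?_
  rw [h]; ring

lemma my_evR_diag (R : CT n) (h : ∀ i j k l, R j i k l = - R i j k l)
    (x z w : EuclideanSpace ℝ (Fin n)) : evR R x x z w = 0 := by
  have := my_evR_swap12 R h x x z w
  linarith
lemma my_ric_contract (R : CT n) (b : Fin n → EuclideanSpace ℝ (Fin n))
    (hcol : ∀ p r : Fin n, ∑ x, b x p * b x r = (if p = r then (1:ℝ) else 0))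
    (w : EuclideanSpace ℝ (Fin n)) :
    ∑ x, evR R (b x) w (b x) w = RicEv R w w := by
  unfold evR RicEv Ricc
  rw [my_sum_out5 (f := fun x i j k l => b x i * w j * b x k * w l * R i j k l)]
  have h1 : ∀ i j k l : Fin n, (∑ x, b x i * w j * b x k * w l * R i j k l)
      = (if i = k then (1:ℝ) else 0) * (w j * w l * R i j k l) := by
    intro i j k l
    rw [← hcol i k, Finset.sum_mul]
    exact Finset.sum_congr rfl fun x _ => by ring
  simp only [h1]
  simp only [← Finset.mul_sum]
  simp only [ite_mul, one_mul, zero_mul, Finset.sum_ite_eq, Finset.mem_univ, if_true]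
  simp only [Finset.mul_sum]
  exact my_sum_out3 (f := fun x j l => w j * w l * R x j x l)

lemma my_sum_RicEv (R : CT n) (b : Fin n → EuclideanSpace ℝ (Fin n))
    (hcol : ∀ p r : Fin n, ∑ x, b x p * b x r = (if p = r then (1:ℝ) else 0)) :
    ∑ y, RicEv R (b y) (b y) = scalc R := by
  unfold RicEv scalc
  rw [my_sum_out3 (f := fun y j k => b y j * b y k * Ricc R j k)]
  have h1 : ∀ j k : Fin n, (∑ y, b y j * b y k * Ricc R j k)
      = (if j = k then (1:ℝ) else 0) * Ricc R j k := by
    intro j k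
    rw [← hcol j k, Finset.sum_mul]
  simp only [h1]
  simp only [ite_mul, one_mul, zero_mul, Finset.sum_ite_eq, Finset.mem_univ, if_true]
lemma my_pair_sum {ι : Type*} [DecidableEq ι] (t : Finset ι) (g : ι → ℝ) :
    ∑ c ∈ t, ∑ d ∈ t.erase c, (g c + g d)
      = 2 * ((t.card : ℝ) - 1) * ∑ c ∈ t, g c := by
  have h1 : ∀ c ∈ t, ∑ d ∈ t.erase c, (g c + g d)
      = ((t.card : ℝ) - 1) * g c + (∑ d ∈ t, g d - g c) := by
    intro c hc
    rw [Finset.sum_add_distrib, Finset.sum_const, Finset.sum_erase_eq_sub hc,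
      Finset.card_erase_of_mem hc, nsmul_eq_mul]
    have hc1 : 1 ≤ t.card := Finset.card_pos.2 ⟨c, hc⟩
    have : ((t.card - 1 : ℕ) : ℝ) = (t.card : ℝ) - 1 := by
      rw [Nat.cast_sub hc1]; norm_num
    rw [this]
  rw [Finset.sum_congr rfl h1, Finset.sum_add_distrib, Finset.sum_sub_distrib,
    Finset.sum_const, ← Finset.mul_sum, nsmul_eq_mul]
  ring

lemma my_comb {ι : Type*} [DecidableEq ι] (s : Finset ι) (K : ι → ι → ℝ)
    (hdiag : ∀ a, K a a = 0) (hcard : 4 ≤ s.card)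
    (hF : ∀ a b c d : ι, a ≠ b → a ≠ c → a ≠ d → b ≠ c → b ≠ d → c ≠ d →
      0 ≤ K a c + K a d + K b c + K b d) :
    0 ≤ ∑ a ∈ s, ∑ c ∈ s, K a c := by
  classical
  set m : ℝ := (s.card : ℝ) with hm
  set T : ℝ := ∑ a ∈ s, ∑ c ∈ s, K a c with hT
  have hm4 : (4 : ℝ) ≤ m := by rw [hm]; exact_mod_cast hcard
  have hpos : (0:ℝ) ≤ ∑ a ∈ s, ∑ b ∈ s.erase a, ∑ c ∈ (s.erase a).erase b,
      ∑ d ∈ ((s.erase a).erase b).erase c, (K a c + K a d + K b c + K b d) := by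
    refine Finset.sum_nonneg fun a _ => Finset.sum_nonneg fun b hb =>
      Finset.sum_nonneg fun c hc => Finset.sum_nonneg fun d hd => ?_
    have hb1 := Finset.mem_erase.1 hb
    have hc1 := Finset.mem_erase.1 hc
    have hc2 := Finset.mem_erase.1 hc1.2
    have hd1 := Finset.mem_erase.1 hd
    have hd2 := Finset.mem_erase.1 hd1.2
    have hd3 := Finset.mem_erase.1 hd2.2
    exact hF a b c d (Ne.symm hb1.1) (Ne.symm hc2.1) (Ne.symm hd3.1)
      (Ne.symm hc1.1) (Ne.symm hd2.1) (Ne.symm hd1.1)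
  have step1 : ∀ a ∈ s, ∀ b ∈ s.erase a,
      ∑ c ∈ (s.erase a).erase b, ∑ d ∈ ((s.erase a).erase b).erase c,
        (K a c + K a d + K b c + K b d)
      = 2 * (m - 3) * ∑ c ∈ (s.erase a).erase b, (K a c + K b c) := by
    intro a ha b hb
    have hcard2 : ((s.erase a).erase b).card = s.card - 2 := by
      rw [Finset.card_erase_of_mem hb, Finset.card_erase_of_mem ha]; omega
    have hps := my_pair_sum ((s.erase a).erase b) (fun c => K a c + K b c)
    rw [hcard2] at hps
    have hc2 : ((s.card - 2 : ℕ) : ℝ) = m - 2 := by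
      rw [Nat.cast_sub (by omega), hm]; norm_num
    rw [hc2] at hps
    calc ∑ c ∈ (s.erase a).erase b, ∑ d ∈ ((s.erase a).erase b).erase c,
          (K a c + K a d + K b c + K b d)
        = ∑ c ∈ (s.erase a).erase b, ∑ d ∈ ((s.erase a).erase b).erase c,
          ((fun c => K a c + K b c) c + (fun c => K a c + K b c) d) := by
          refine Finset.sum_congr rfl fun c _ => Finset.sum_congr rfl fun d _ => ?_
          ring
      _ = 2 * (m - 2 - 1) * ∑ c ∈ (s.erase a).erase b, (K a c + K b c) := hps
      _ = 2 * (m - 3) * ∑ c ∈ (s.erase a).erase b, (K a c + K b c) := by ring_nf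
  have step2 : ∀ a ∈ s, ∀ b ∈ s.erase a,
      ∑ c ∈ (s.erase a).erase b, (K a c + K b c)
      = (∑ c ∈ s, K a c) + (∑ c ∈ s, K b c) - K a b - K b a := by
    intro a ha b hb
    rw [Finset.sum_erase_eq_sub hb, Finset.sum_erase_eq_sub ha,
      Finset.sum_add_distrib, hdiag, hdiag]
    ring
  have step3 : ∑ a ∈ s, ∑ b ∈ s.erase a,
      ((∑ c ∈ s, K a c) + (∑ c ∈ s, K b c) - K a b - K b a) = (2*m - 4) * T := by
    have inner : ∀ a ∈ s, ∑ b ∈ s.erase a,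
        ((∑ c ∈ s, K a c) + (∑ c ∈ s, K b c) - K a b - K b a)
        = (m - 3) * (∑ c ∈ s, K a c) + T - (∑ b ∈ s, K b a) := by
      intro a ha
      rw [Finset.sum_sub_distrib, Finset.sum_sub_distrib, Finset.sum_add_distrib,
        Finset.sum_const, Finset.sum_erase_eq_sub ha (f := fun b => ∑ c ∈ s, K b c),
        Finset.sum_erase_eq_sub ha (f := fun b => K a b),
        Finset.sum_erase_eq_sub ha (f := fun b => K b a),
        Finset.card_erase_of_mem ha, nsmul_eq_mul, hdiag]
      have hc1 : ((s.card - 1 : ℕ) : ℝ) = m - 1 := by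
        rw [Nat.cast_sub (by omega), hm]; norm_num
      rw [hc1, hT]
      ring
    rw [Finset.sum_congr rfl inner, Finset.sum_sub_distrib, Finset.sum_add_distrib,
      Finset.sum_const, ← Finset.mul_sum, nsmul_eq_mul, Finset.sum_comm (f := fun a b => K b a)]
    rw [← hm]
    ring
  have key : ∑ a ∈ s, ∑ b ∈ s.erase a, ∑ c ∈ (s.erase a).erase b,
      ∑ d ∈ ((s.erase a).erase b).erase c, (K a c + K a d + K b c + K b d)
      = 2 * (m - 3) * ((2 * m - 4) * T) := by
    calc ∑ a ∈ s, ∑ b ∈ s.erase a, ∑ c ∈ (s.erase a).erase b,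
        ∑ d ∈ ((s.erase a).erase b).erase c, (K a c + K a d + K b c + K b d)
        = ∑ a ∈ s, ∑ b ∈ s.erase a, 2 * (m - 3) *
            ((∑ c ∈ s, K a c) + (∑ c ∈ s, K b c) - K a b - K b a) := by
          refine Finset.sum_congr rfl fun a ha => Finset.sum_congr rfl fun b hb => ?_
          rw [step1 a ha b hb, step2 a ha b hb]
      _ = 2 * (m - 3) * ((2 * m - 4) * T) := by
          simp only [← Finset.mul_sum]
          rw [step3]
  rw [key] at hpos
  by_contra hneg
  push_neg at hneg
  have h1 : (0:ℝ) < m - 3 := by linarith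
  have h2 : (0:ℝ) < 2 * m - 4 := by linarith
  have h3 : (2 * m - 4) * T < 0 := mul_neg_of_pos_of_neg h2 hneg
  nlinarith
lemma my_evR_swap34 (R : CT n) (h : ∀ i j k l, R i j l k = - R i j k l)
    (x y z w : EuclideanSpace ℝ (Fin n)) : evR R x y w z = - evR R x y z w := by
  unfold evR
  rw [← Finset.sum_neg_distrib]
  refine Finset.sum_congr rfl fun i _ => ?_
  rw [← Finset.sum_neg_distrib]
  refine Finset.sum_congr rfl fun j _ => ?_
  rw [Finset.sum_comm, ← Finset.sum_neg_distrib]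
  refine Finset.sum_congr rfl fun k _ => ?_
  rw [← Finset.sum_neg_distrib]
  refine Finset.sum_congr rfl fun l _ => ?_
  rw [h]; ring

lemma my_col_ortho (b : Fin n → EuclideanSpace ℝ (Fin n)) (hb : Orthonormal ℝ b)
    (p r : Fin n) : ∑ x, b x p * b x r = (if p = r then (1:ℝ) else 0) := by
  classical
  set M : Matrix (Fin n) (Fin n) ℝ := Matrix.of (fun i j => b i j) with hM
  have h1 : M * M.transpose = 1 := by
    ext i j
    have h := (orthonormal_iff_ite.mp hb) i j
    simp only [PiLp.inner_apply, RCLike.inner_apply, starRingEnd_apply, star_trivial] at h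
    simp [Matrix.mul_apply, Matrix.one_apply, hM, h]
    rw [← h]; exact Finset.sum_congr rfl fun x _ => mul_comm _ _
  have h2 : M.transpose * M = 1 := mul_eq_one_comm.mp h1
  have h3 : (M.transpose * M) p r = (1 : Matrix (Fin n) (Fin n) ℝ) p r := by rw [h2]
  simpa [Matrix.mul_apply, Matrix.one_apply, hM] using h3

theorem my_main {n : ℕ} (hn : 5 ≤ n) (R : CT n)
    (hR : IsAlgCurv R) (hPIC : WeaklyPIC R) :
    ∀ v : EuclideanSpace ℝ (Fin n), ‖v‖ = 1 → RicEv R v v ≤ scalc R / 2 := by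
  intro v hv
  obtain ⟨h1, h2, h3, _h4⟩ := hR
  have hnpos : 0 < n := by omega
  set i0 : Fin n := ⟨0, hnpos⟩ with hi0
  have hfr : Module.finrank ℝ (EuclideanSpace ℝ (Fin n)) = Fintype.card (Fin n) := by simp
  have hone : Orthonormal ℝ (({i0} : Set (Fin n)).restrict (fun _ => v)) := by
    rw [orthonormal_iff_ite]
    intro i j
    have hij : i = j := Subtype.ext ((Set.mem_singleton_iff.mp i.2).trans
      (Set.mem_singleton_iff.mp j.2).symm)
    subst hij
    simp only [if_pos rfl, Set.restrict_apply]
    rw [real_inner_self_eq_norm_mul_norm]; show ‖v‖ * ‖v‖ = _; rw [hv]; norm_num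
  obtain ⟨b, hb⟩ := hone.exists_orthonormalBasis_extension_of_card_eq hfr
  have hbv : b i0 = v := hb i0 rfl
  have hcol := my_col_ortho (fun x => b x) b.orthonormal
  have hinner : ∀ x y : Fin n, (inner ℝ (b x) (b y) : ℝ) = if x = y then 1 else 0 :=
    orthonormal_iff_ite.mp b.orthonormal
  set K : Fin n → Fin n → ℝ := fun x y => evR R (b x) (b y) (b x) (b y) with hK
  have hKdiag : ∀ x, K x x = 0 := fun x => my_evR_diag R h1 _ _ _
  have hKsym : ∀ x y, K x y = K y x := by
    intro x y
    have e1 := my_evR_swap12 R h1 (b x) (b y) (b y) (b x)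
    have e2 := my_evR_swap34 R h2 (b x) (b y) (b y) (b x)
    have e3 := my_evR_pairswap R h3 (b x) (b y) (b y) (b x)
    simp only [hK]
    linarith [my_evR_swap12 R h1 (b x) (b y) (b x) (b y),
      my_evR_swap34 R h2 (b y) (b x) (b x) (b y),
      my_evR_pairswap R h3 (b y) (b x) (b x) (b y)]
  have hsum_full : ∑ x, ∑ y, K x y = scalc R := by
    rw [Finset.sum_comm]
    rw [Finset.sum_congr rfl fun y _ => my_ric_contract R (fun x => b x) hcol (b y)]
    exact my_sum_RicEv R (fun x => b x) hcol
  have hrow : ∑ x, K x i0 = RicEv R v v := by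
    have := my_ric_contract R (fun x => b x) hcol v
    rw [← this]
    exact Finset.sum_congr rfl fun x _ => by show evR R (b x) (b i0) (b x) (b i0) = evR R (b x) v (b x) v; rw [hbv]
  have hcolsum : ∑ y, K i0 y = RicEv R v v := by
    rw [Finset.sum_congr rfl fun y _ => hKsym i0 y]
    exact hrow
  have hers : ∑ a ∈ Finset.univ.erase i0, ∑ c ∈ Finset.univ.erase i0, K a c
      = scalc R - 2 * RicEv R v v := by
    calc ∑ a ∈ Finset.univ.erase i0, ∑ c ∈ Finset.univ.erase i0, K a c
        = ∑ a ∈ Finset.univ.erase i0, ((∑ c, K a c) - K a i0) :=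
          Finset.sum_congr rfl fun a _ => Finset.sum_erase_eq_sub (Finset.mem_univ i0)
      _ = (∑ a, ((∑ c, K a c) - K a i0)) - ((∑ c, K i0 c) - K i0 i0) :=
          Finset.sum_erase_eq_sub (Finset.mem_univ i0)
      _ = (scalc R - RicEv R v v) - (RicEv R v v - 0) := by
          rw [Finset.sum_sub_distrib, hsum_full, hrow, hcolsum, hKdiag]
      _ = scalc R - 2 * RicEv R v v := by ring
  have hcard4 : 4 ≤ (Finset.univ.erase i0).card := by
    rw [Finset.card_erase_of_mem (Finset.mem_univ i0), Finset.card_univ, Fintype.card_fin]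
    omega
  have hF : ∀ a c d e : Fin n, a ≠ c → a ≠ d → a ≠ e → c ≠ d → c ≠ e → d ≠ e →
      0 ≤ K a d + K a e + K c d + K c e := by
    intro a c d e hac had hae hcd hce hde
    have hON : ONFrame ![b a, b c, b d, b e] := by
      intro i j
      fin_cases i <;> fin_cases j <;>
        simp [hinner, hac, had, hae, hcd, hce, hde,
          Ne.symm hac, Ne.symm had, Ne.symm hae, Ne.symm hcd, Ne.symm hce, Ne.symm hde]
    have hON' : ONFrame ![b c, b a, b d, b e] := by
      intro i j
      fin_cases i <;> fin_cases j <;>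
        simp [hinner, hac, had, hae, hcd, hce, hde,
          Ne.symm hac, Ne.symm had, Ne.symm hae, Ne.symm hcd, Ne.symm hce, Ne.symm hde]
    have hP1 := hPIC _ hON
    have hP2 := hPIC _ hON'
    simp only [Matrix.cons_val_zero, Matrix.cons_val_one, Matrix.head_cons,
      Matrix.cons_val_two, Matrix.tail_cons, Matrix.cons_val_three] at hP1 hP2
    have hsw := my_evR_swap12 R h1 (b a) (b c) (b d) (b e)
    simp only [hK]
    linarith
  have hT := my_comb (Finset.univ.erase i0) K hKdiag hcard4 hF
  rw [hers] at hT
  linarith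

/-- For `n ≥ 5`, a weakly PIC algebraic curvature tensor on ℝⁿ has every
eigenvalue of its Ricci tensor at most `scal/2`, i.e. `Ric(v,v) ≤ scal/2` for every
unit vector `v`. -/
theorem ricci_eigenvalue_le_half_scal {n : ℕ} (hn : 5 ≤ n) (R : CT n)
    (hR : IsAlgCurv R) (hPIC : WeaklyPIC R) :
    ∀ v : EuclideanSpace ℝ (Fin n), ‖v‖ = 1 → RicEv R v v ≤ scalc R / 2 :=
  my_main hn R hR hPIC
end
end

section
/- Let n ≥ 5 and let R be a weakly PIC algebraic curvature tensor on ℝⁿ. Then scal(R) − 2·Ric_{nn}(R) = Σ_{i,j=1}^{n−1} R_{ijij} ≥ 0, where e₁,…,eₙ is any orthonormal basis. In particular the quantity Σ_{i,j≤n−1} R_{ijij} is a sum over isotropic curvature terms and is nonnegative. -/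
/- Common definitions: algebraic curvature tensors on ℝⁿ, represented by their
components in an orthonormal frame. -/

noncomputable section
open Finset

lemma evR_swap12 {n : ℕ} (R : CT n) (h : ∀ i j k l, R j i k l = - R i j k l)
    (v w x y : EuclideanSpace ℝ (Fin n)) : evR R w v x y = - evR R v w x y := by
  unfold evR
  rw [Finset.sum_comm, ← Finset.sum_neg_distrib]
  refine Finset.sum_congr rfl fun i _ => ?_
  rw [← Finset.sum_neg_distrib]
  refine Finset.sum_congr rfl fun j _ => ?_
  rw [← Finset.sum_neg_distrib]
  refine Finset.sum_congr rfl fun k _ => ?_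
  rw [← Finset.sum_neg_distrib]
  refine Finset.sum_congr rfl fun l _ => ?_
  rw [h]; ring

lemma evR_swap34 {n : ℕ} (R : CT n) (h : ∀ i j k l, R i j l k = - R i j k l)
    (v w x y : EuclideanSpace ℝ (Fin n)) : evR R v w y x = - evR R v w x y := by
  unfold evR
  rw [← Finset.sum_neg_distrib]
  refine Finset.sum_congr rfl fun i _ => ?_
  rw [← Finset.sum_neg_distrib]
  refine Finset.sum_congr rfl fun j _ => ?_
  rw [Finset.sum_comm, ← Finset.sum_neg_distrib]
  refine Finset.sum_congr rfl fun k _ => ?_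
  rw [← Finset.sum_neg_distrib]
  refine Finset.sum_congr rfl fun l _ => ?_
  rw [h]; ring
lemma evR_symB {n : ℕ} (R : CT n) (hR : IsAlgCurv R)
    (v w : EuclideanSpace ℝ (Fin n)) : evR R w v w v = evR R v w v w := by
  rw [evR_swap12 R hR.1, evR_swap34 R hR.2.1]; ring

lemma evR_diag0 {n : ℕ} (R : CT n) (hR : IsAlgCurv R)
    (v : EuclideanSpace ℝ (Fin n)) : evR R v v v v = 0 := by
  have := evR_swap12 R hR.1 v v v v
  linarith

lemma pair_sum {ι : Type*} [DecidableEq ι] (T : Finset ι) (f : ι → ℝ) :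
    ∑ c ∈ T, ∑ d ∈ T.erase c, (f c + f d) = 2 * ((T.card : ℝ) - 1) * ∑ c ∈ T, f c := by
  have h1 : ∀ c ∈ T, ∑ d ∈ T.erase c, (f c + f d)
      = ((T.card : ℝ) - 1) * f c + ((∑ d ∈ T, f d) - f c) := by
    intro c hc
    rw [Finset.sum_add_distrib, Finset.sum_const, Finset.card_erase_of_mem hc,
      Finset.sum_erase_eq_sub hc, nsmul_eq_mul, Nat.cast_sub (Finset.card_pos.mpr ⟨c, hc⟩),
      Nat.cast_one]
  rw [Finset.sum_congr rfl h1, Finset.sum_add_distrib, Finset.sum_sub_distrib,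
    ← Finset.mul_sum, Finset.sum_const, nsmul_eq_mul]
  ring
lemma key_quad {n : ℕ} (R : CT n) (hR : IsAlgCurv R) (hPIC : WeaklyPIC R)
    (e : Fin n → EuclideanSpace ℝ (Fin n)) (he : ONFrame e)
    (a b c d : Fin n) (hab : a ≠ b) (hac : a ≠ c) (had : a ≠ d)
    (hbc : b ≠ c) (hbd : b ≠ d) (hcd : c ≠ d) :
    0 ≤ evR R (e a) (e c) (e a) (e c) + evR R (e a) (e d) (e a) (e d) +
        evR R (e b) (e c) (e b) (e c) + evR R (e b) (e d) (e b) (e d) := by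
  have hf1 : ONFrame (fun i => e (![a, b, c, d] i)) := by
    intro i j
    rw [he]
    fin_cases i <;> fin_cases j <;>
      simp [hab, hac, had, hbc, hbd, hcd, hab.symm, hac.symm, had.symm, hbc.symm,
        hbd.symm, hcd.symm]
  have hf2 : ONFrame (fun i => e (![a, b, d, c] i)) := by
    intro i j
    rw [he]
    fin_cases i <;> fin_cases j <;>
      simp [hab, hac, had, hbc, hbd, hcd, hab.symm, hac.symm, had.symm, hbc.symm,
        hbd.symm, hcd.symm]
  have h1 := hPIC _ hf1
  have h2 := hPIC _ hf2
  simp only [Matrix.cons_val_zero, Matrix.cons_val_one, Matrix.head_cons,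
    Matrix.cons_val_two, Matrix.tail_cons, Matrix.cons_val_three] at h1 h2
  have h3 : evR R (e a) (e b) (e d) (e c) = - evR R (e a) (e b) (e c) (e d) :=
    evR_swap34 R hR.2.1 _ _ _ _
  rw [h3] at h2
  linarith

/-- For `n ≥ 5` and a weakly PIC algebraic curvature tensor `R`, for any
orthonormal basis `e` and distinguished basis vector `e k` (playing the role of `eₙ`),
`scal − 2 Ric_{kk}` equals the sum `∑_{i,j ≠ k} R(e_i,e_j,e_i,e_j)`, and this sum is
nonnegative. -/
theorem scal_sub_two_ric_eq_sum_nonneg {n : ℕ} (hn : 5 ≤ n) (R : CT n)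
    (hR : IsAlgCurv R) (hPIC : WeaklyPIC R)
    (e : Fin n → EuclideanSpace ℝ (Fin n)) (he : ONFrame e) (k : Fin n) :
    (∑ i, ∑ j, evR R (e i) (e j) (e i) (e j)) -
        2 * (∑ i, evR R (e i) (e k) (e i) (e k)) =
      (∑ i ∈ Finset.univ.erase k, ∑ j ∈ Finset.univ.erase k, evR R (e i) (e j) (e i) (e j)) ∧
    0 ≤ ∑ i ∈ Finset.univ.erase k, ∑ j ∈ Finset.univ.erase k, evR R (e i) (e j) (e i) (e j) := by
  set B : Fin n → Fin n → ℝ := fun i j => evR R (e i) (e j) (e i) (e j) with hB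
  have hsym : ∀ i j, B j i = B i j := fun i j => evR_symB R hR _ _
  have hdiag : ∀ i, B i i = 0 := fun i => evR_diag0 R hR _
  set S : Finset (Fin n) := Finset.univ.erase k with hS
  have hkmem : k ∈ (Finset.univ : Finset (Fin n)) := Finset.mem_univ k
  have hScard : S.card = n - 1 := by
    rw [hS, Finset.card_erase_of_mem hkmem, Finset.card_univ, Fintype.card_fin]
  have hScard4 : 4 ≤ S.card := by omega
  constructor
  · -- part 1
    have e1 : ∀ i : Fin n, ∑ j ∈ S, B i j = (∑ j, B i j) - B i k := fun i =>
      Finset.sum_erase_eq_sub hkmem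
    rw [Finset.sum_congr rfl (fun i _ => e1 i), Finset.sum_erase_eq_sub hkmem,
      Finset.sum_sub_distrib]
    have hk2 : ∑ j, B k j = ∑ i, B i k := Finset.sum_congr rfl fun j _ => hsym j k
    rw [hk2, hdiag]
    ring
  · -- part 2
    have stepA : ∀ a ∈ S, ∀ b ∈ S.erase a,
        0 ≤ ∑ c ∈ (S.erase a).erase b, (B a c + B b c) := by
      intro a ha b hb
      obtain ⟨hba, hbS⟩ := Finset.mem_erase.mp hb
      have hTcard : ((S.erase a).erase b).card = S.card - 2 := by
        rw [Finset.card_erase_of_mem hb, Finset.card_erase_of_mem ha]; omega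
      have hsum : 0 ≤ ∑ c ∈ (S.erase a).erase b, ∑ d ∈ ((S.erase a).erase b).erase c,
          ((fun c => B a c + B b c) c + (fun c => B a c + B b c) d) := by
        refine Finset.sum_nonneg fun c hc => Finset.sum_nonneg fun d hd => ?_
        obtain ⟨hcb, hc'⟩ := Finset.mem_erase.mp hc
        obtain ⟨hca, _⟩ := Finset.mem_erase.mp hc'
        obtain ⟨hdc, hd'⟩ := Finset.mem_erase.mp hd
        obtain ⟨hdb, hd''⟩ := Finset.mem_erase.mp hd'
        obtain ⟨hda, _⟩ := Finset.mem_erase.mp hd''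
        have := key_quad R hR hPIC e he a b c d hba.symm hca.symm hda.symm
          hcb.symm hdb.symm hdc.symm
        simp only []
        rw [hB]
        linarith
      rw [pair_sum] at hsum
      have hc2 : (2 : ℝ) ≤ (((S.erase a).erase b).card : ℝ) := by
        have : 2 ≤ ((S.erase a).erase b).card := by omega
        exact_mod_cast this
      nlinarith [hsum, hc2]
    have inner_eq : ∀ a ∈ S, ∀ b ∈ S.erase a,
        ∑ c ∈ (S.erase a).erase b, (B a c + B b c)
          = (∑ c ∈ S, B a c) + (∑ c ∈ S, B b c) - 2 * B a b := by
      intro a ha b hb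
      obtain ⟨hba, hbS⟩ := Finset.mem_erase.mp hb
      rw [Finset.sum_add_distrib, Finset.sum_erase_eq_sub hb, Finset.sum_erase_eq_sub hb,
        Finset.sum_erase_eq_sub ha, Finset.sum_erase_eq_sub ha, hdiag, hdiag, hsym a b]
      ring
    have h2' : ∑ a ∈ S, ∑ b ∈ S.erase a, B a b = ∑ a ∈ S, ∑ c ∈ S, B a c := by
      refine Finset.sum_congr rfl fun a ha => ?_
      rw [Finset.sum_erase_eq_sub ha, hdiag]
      ring
    have main : ∑ a ∈ S, ∑ b ∈ S.erase a,
        ((∑ c ∈ S, B a c) + (∑ c ∈ S, B b c) - 2 * B a b)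
          = 2 * ((S.card : ℝ) - 2) * ∑ a ∈ S, ∑ c ∈ S, B a c := by
      have hp := pair_sum S (fun a => ∑ c ∈ S, B a c)
      calc ∑ a ∈ S, ∑ b ∈ S.erase a, ((∑ c ∈ S, B a c) + (∑ c ∈ S, B b c) - 2 * B a b)
          = (∑ a ∈ S, ∑ b ∈ S.erase a, ((∑ c ∈ S, B a c) + (∑ c ∈ S, B b c)))
            - 2 * ∑ a ∈ S, ∑ b ∈ S.erase a, B a b := by
            simp only [Finset.sum_sub_distrib, Finset.mul_sum]
        _ = 2 * ((S.card : ℝ) - 1) * (∑ a ∈ S, ∑ c ∈ S, B a c)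
            - 2 * ∑ a ∈ S, ∑ c ∈ S, B a c := by rw [hp, h2']
        _ = 2 * ((S.card : ℝ) - 2) * ∑ a ∈ S, ∑ c ∈ S, B a c := by ring
    have big : 0 ≤ 2 * ((S.card : ℝ) - 2) * ∑ a ∈ S, ∑ c ∈ S, B a c := by
      rw [← main]
      refine Finset.sum_nonneg fun a ha => Finset.sum_nonneg fun b hb => ?_
      rw [← inner_eq a ha b hb]
      exact stepA a ha b hb
    have hc4 : (4 : ℝ) ≤ (S.card : ℝ) := by exact_mod_cast hScard4
    nlinarith [big, hc4]
end
end

section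
/- Let n ≥ 5 and let R be a weakly PIC algebraic curvature tensor on ℝⁿ with Ric(R) = 0. Then R = 0. Consequently, the PIC cone has the property that scal(R) > 0 for all nonzero R in it, and there is a dimensional constant Θ(n) with |R| ≤ Θ(n)·scal(R) for every weakly PIC curvature tensor R. -/
/- Common definitions: algebraic curvature tensors on ℝⁿ, represented by their
components in an orthonormal frame. -/

noncomputable section
open Finset

namespace PicAux

open Matrix in
/-- Rows of an orthonormal basis of Euclidean space form an orthogonal matrix; columns too. -/
lemma parseval {n : ℕ} (b : OrthonormalBasis (Fin n) ℝ (EuclideanSpace ℝ (Fin n))) (j l : Fin n) :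
    ∑ a, b a j * b a l = if j = l then 1 else 0 := by
  classical
  set M : Matrix (Fin n) (Fin n) ℝ := fun a i => b a i with hM
  have h1 : M * Mᵀ = 1 := by
    ext a c
    have := (orthonormal_iff_ite.mp b.orthonormal) a c
    rw [PiLp.inner_apply] at this
    rw [Matrix.mul_apply, Matrix.one_apply]
    simpa [hM, mul_comm, Matrix.transpose, Matrix.of_apply] using this
  have h2 : Mᵀ * M = 1 := mul_eq_one_comm.mp h1
  have := congrFun (congrFun h2 j) l
  rw [Matrix.mul_apply, Matrix.one_apply] at this
  simpa [hM, Matrix.transpose, Matrix.of_apply] using this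

section Comb

variable {ι : Type*} [DecidableEq ι] {H : ι → ι → ℝ}

lemma pair_sum_expand (T : Finset ι) (G : ι → ℝ) :
    ∑ a ∈ T, ∑ c ∈ T.erase a, (G a + G c)
      = 2 * ((T.card : ℝ) - 1) * ∑ a ∈ T, G a := by
  have h : ∀ a ∈ T, ∑ c ∈ T.erase a, (G a + G c)
      = ((T.card : ℝ) - 1) * G a + (∑ c ∈ T, G c - G a) := by
    intro a ha
    rw [Finset.sum_add_distrib, Finset.sum_const, Finset.sum_erase_eq_sub ha,
      Finset.card_erase_of_mem ha, nsmul_eq_mul]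
    have h1 : 1 ≤ T.card := Finset.card_pos.mpr ⟨a, ha⟩
    push_cast [Nat.cast_sub h1]
    ring
  rw [Finset.sum_congr rfl h, Finset.sum_add_distrib, Finset.sum_sub_distrib,
    ← Finset.mul_sum, Finset.sum_const, nsmul_eq_mul]
  ring

lemma sum_nonneg_of_pairwise {T : Finset ι} (hT : 2 ≤ T.card)
    {G : ι → ℝ} (h : ∀ a ∈ T, ∀ c ∈ T, a ≠ c → 0 ≤ G a + G c) : 0 ≤ ∑ a ∈ T, G a := by
  have key : 0 ≤ ∑ a ∈ T, ∑ c ∈ T.erase a, (G a + G c) :=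
    Finset.sum_nonneg fun a ha => Finset.sum_nonneg fun c hc =>
      h a ha c (Finset.mem_of_mem_erase hc) (Finset.ne_of_mem_erase hc).symm
  rw [pair_sum_expand] at key
  have hc1 : (1:ℝ) ≤ (T.card : ℝ) - 1 := by
    have : (2:ℝ) ≤ (T.card : ℝ) := by exact_mod_cast hT
    linarith
  nlinarith

lemma comb_star (hsym : ∀ a c, H a c = H c a) (hdiag : ∀ a, H a a = 0)
    {T : Finset ι} (hT : 4 ≤ T.card)
    (hpic : ∀ p ∈ T, ∀ q ∈ T, ∀ a ∈ T, ∀ c ∈ T,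
      p ≠ q → p ≠ a → p ≠ c → q ≠ a → q ≠ c → a ≠ c →
      0 ≤ H p a + H p c + H q a + H q c)
    {p q : ι} (hp : p ∈ T) (hq : q ∈ T) (hpq : p ≠ q) :
    2 * H p q ≤ (∑ c ∈ T, H p c) + (∑ c ∈ T, H q c) := by
  set T2 := (T.erase p).erase q with hT2
  have hqp : q ∈ T.erase p := Finset.mem_erase.mpr ⟨hpq.symm, hq⟩
  have hcard : 2 ≤ T2.card := by
    rw [hT2, Finset.card_erase_of_mem hqp, Finset.card_erase_of_mem hp]
    omega
  have hsum : 0 ≤ ∑ c ∈ T2, (H p c + H q c) := by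
    refine sum_nonneg_of_pairwise hcard fun a ha c hc hac => ?_
    have ha' := Finset.mem_erase.mp ha
    have ha'' := Finset.mem_erase.mp ha'.2
    have hc' := Finset.mem_erase.mp hc
    have hc'' := Finset.mem_erase.mp hc'.2
    have := hpic p hp q hq a ha''.2 c hc''.2 hpq (Ne.symm ha''.1) (Ne.symm hc''.1)
      (Ne.symm ha'.1) (Ne.symm hc'.1) hac
    linarith
  have e1 : ∑ c ∈ T2, (H p c + H q c)
      = (∑ c ∈ T, (H p c + H q c)) - (H p q + H q q) - (H p p + H q p) := by
    rw [hT2, Finset.sum_erase_eq_sub hqp, Finset.sum_erase_eq_sub hp]; ring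
  rw [e1, hdiag p, hdiag q, hsym q p, Finset.sum_add_distrib] at hsum
  linarith

lemma comb_main (hsym : ∀ a c, H a c = H c a) (hdiag : ∀ a, H a a = 0)
    {T : Finset ι} (hT : 4 ≤ T.card)
    (hpic : ∀ p ∈ T, ∀ q ∈ T, ∀ a ∈ T, ∀ c ∈ T,
      p ≠ q → p ≠ a → p ≠ c → q ≠ a → q ≠ c → a ≠ c →
      0 ≤ H p a + H p c + H q a + H q c) :
    0 ≤ ∑ i ∈ T, ∑ c ∈ T, H i c := by
  set Row : ι → ℝ := fun i => ∑ c ∈ T, H i c with hRow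
  have key : 0 ≤ ∑ i ∈ T, ∑ j ∈ T.erase i, (Row i + Row j - 2 * H i j) :=
    Finset.sum_nonneg fun i hi => Finset.sum_nonneg fun j hj => by
      have := comb_star hsym hdiag hT hpic hi (Finset.mem_of_mem_erase hj)
        (Finset.ne_of_mem_erase hj).symm
      linarith
  have e1 : ∑ i ∈ T, ∑ j ∈ T.erase i, (Row i + Row j - 2 * H i j)
      = 2 * ((T.card : ℝ) - 1) * (∑ i ∈ T, Row i) - 2 * ∑ i ∈ T, Row i := by
    have : ∀ i ∈ T, ∑ j ∈ T.erase i, (Row i + Row j - 2 * H i j)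
        = (∑ j ∈ T.erase i, (Row i + Row j)) - 2 * (Row i - H i i) := by
      intro i hi
      rw [Finset.sum_sub_distrib, ← Finset.mul_sum]
      congr 1
      rw [Finset.sum_erase_eq_sub hi]
    rw [Finset.sum_congr rfl this, Finset.sum_sub_distrib, pair_sum_expand]
    have : ∀ i ∈ T, 2 * (Row i - H i i) = 2 * Row i := by
      intro i _; rw [hdiag]; ring
    rw [Finset.sum_congr rfl this, ← Finset.mul_sum]
  rw [e1] at key
  have hc : (4:ℝ) ≤ (T.card : ℝ) := by exact_mod_cast hT
  nlinarith

lemma comb_row [Fintype ι] (hsym : ∀ a c, H a c = H c a) (hdiag : ∀ a, H a a = 0)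
    (hcard : 5 ≤ Fintype.card ι)
    (hpic : ∀ p q a c : ι,
      p ≠ q → p ≠ a → p ≠ c → q ≠ a → q ≠ c → a ≠ c →
      0 ≤ H p a + H p c + H q a + H q c) (p : ι) :
    2 * (∑ a, H p a) ≤ ∑ i, ∑ a, H i a := by
  have hT : 4 ≤ (Finset.univ.erase p).card := by
    rw [Finset.card_erase_of_mem (Finset.mem_univ p), Finset.card_univ]; omega
  have h0 : 0 ≤ ∑ i ∈ Finset.univ.erase p, ∑ c ∈ Finset.univ.erase p, H i c :=
    comb_main hsym hdiag hT (fun a _ b _ c _ d _ => hpic a b c d)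
  have e1 : ∀ i, ∑ c ∈ Finset.univ.erase p, H i c = (∑ c, H i c) - H i p := fun i =>
    Finset.sum_erase_eq_sub (Finset.mem_univ p)
  have e2 : ∑ i ∈ Finset.univ.erase p, ((∑ c, H i c) - H i p)
      = (∑ i, ((∑ c, H i c) - H i p)) - ((∑ c, H p c) - H p p) :=
    Finset.sum_erase_eq_sub (Finset.mem_univ p)
  simp only [e1] at h0
  rw [e2, hdiag p, Finset.sum_sub_distrib] at h0
  have e3 : ∑ i, H i p = ∑ i, H p i := Finset.sum_congr rfl fun i _ => hsym i p
  rw [e3] at h0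
  linarith

end Comb

variable {n : ℕ}

/-- Standard basis vector. -/
def E (n : ℕ) (i : Fin n) : EuclideanSpace ℝ (Fin n) := EuclideanSpace.single i 1

lemma inner_E_E (i j : Fin n) : (inner ℝ (E n i) (E n j) : ℝ) = if i = j then 1 else 0 := by
  simp [E, PiLp.inner_apply, EuclideanSpace.single_apply]

lemma evR_single (S : CT n) (i j k l : Fin n) :
    evR S (E n i) (E n j) (E n k) (E n l) = S i j k l := by
  simp [evR, E, EuclideanSpace.single_apply, ite_mul, zero_mul, one_mul,
    Finset.sum_ite_eq, Finset.mem_univ]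

lemma evR_neg2 (S : CT n) (u v x y : EuclideanSpace ℝ (Fin n)) :
    evR S u (-v) x y = - evR S u v x y := by
  simp [evR, neg_mul, mul_neg, Finset.sum_neg_distrib]

lemma evR_neg4 (S : CT n) (u v x y : EuclideanSpace ℝ (Fin n)) :
    evR S u v x (-y) = - evR S u v x y := by
  simp [evR, neg_mul, mul_neg, Finset.sum_neg_distrib]

lemma evR_add2 (S : CT n) (u v w x y : EuclideanSpace ℝ (Fin n)) :
    evR S u (v + w) x y = evR S u v x y + evR S u w x y := by
  simp [evR, PiLp.add_apply, add_mul, mul_add, Finset.sum_add_distrib]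

lemma evR_add4 (S : CT n) (u v x y w : EuclideanSpace ℝ (Fin n)) :
    evR S u v x (y + w) = evR S u v x y + evR S u v x w := by
  simp [evR, PiLp.add_apply, add_mul, mul_add, Finset.sum_add_distrib]

lemma evR_smul2 (S : CT n) (r : ℝ) (u v x y : EuclideanSpace ℝ (Fin n)) :
    evR S u (r • v) x y = r * evR S u v x y := by
  simp [evR, PiLp.smul_apply, smul_eq_mul, Finset.mul_sum]
  congr 1; ext i; congr 1; ext j; congr 1; ext k; congr 1; ext l; ring

lemma evR_smul4 (S : CT n) (r : ℝ) (u v x y : EuclideanSpace ℝ (Fin n)) :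
    evR S u v x (r • y) = r * evR S u v x y := by
  simp [evR, PiLp.smul_apply, smul_eq_mul, Finset.mul_sum]
  congr 1; ext i; congr 1; ext j; congr 1; ext k; congr 1; ext l; ring

lemma evR_swap12 {S : CT n} (h : ∀ i j k l, S j i k l = - S i j k l)
    (u v x y : EuclideanSpace ℝ (Fin n)) :
    evR S v u x y = - evR S u v x y := by
  unfold evR
  rw [Finset.sum_comm]
  rw [← Finset.sum_neg_distrib]
  refine Finset.sum_congr rfl fun j _ => ?_
  rw [← Finset.sum_neg_distrib]
  refine Finset.sum_congr rfl fun i _ => ?_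
  rw [← Finset.sum_neg_distrib]
  refine Finset.sum_congr rfl fun k _ => ?_
  rw [← Finset.sum_neg_distrib]
  refine Finset.sum_congr rfl fun l _ => ?_
  rw [h i j k l]; ring

lemma evR_swap34 {S : CT n} (h : ∀ i j k l, S i j l k = - S i j k l)
    (u v x y : EuclideanSpace ℝ (Fin n)) :
    evR S u v y x = - evR S u v x y := by
  unfold evR
  rw [← Finset.sum_neg_distrib]
  refine Finset.sum_congr rfl fun i _ => ?_
  rw [← Finset.sum_neg_distrib]
  refine Finset.sum_congr rfl fun j _ => ?_
  rw [Finset.sum_comm, ← Finset.sum_neg_distrib]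
  refine Finset.sum_congr rfl fun k _ => ?_
  rw [← Finset.sum_neg_distrib]
  refine Finset.sum_congr rfl fun l _ => ?_
  rw [h i j k l]; ring

lemma evF_sym {S : CT n} (h12 : ∀ i j k l, S j i k l = - S i j k l)
    (h34 : ∀ i j k l, S i j l k = - S i j k l) (u v : EuclideanSpace ℝ (Fin n)) :
    evR S v u v u = evR S u v u v := by
  rw [evR_swap12 h12, evR_swap34 h34]; ring

lemma evF_diag {S : CT n} (h12 : ∀ i j k l, S j i k l = - S i j k l)
    (u : EuclideanSpace ℝ (Fin n)) : evR S u u u u = 0 := by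
  have := evR_swap12 h12 u u u u
  linarith

lemma sum_basis_pair (S : CT n) (b : OrthonormalBasis (Fin n) ℝ (EuclideanSpace ℝ (Fin n)))
    (u : EuclideanSpace ℝ (Fin n)) :
    ∑ a, evR S u (b a) u (b a) = ∑ i, ∑ k, u i * u k * (∑ j, S i j k j) := by
  unfold evR
  rw [Finset.sum_comm]
  refine Finset.sum_congr rfl fun i _ => ?_
  rw [Finset.sum_comm]
  conv_lhs => enter [2, j]; rw [Finset.sum_comm]
  rw [Finset.sum_comm]
  refine Finset.sum_congr rfl fun k _ => ?_
  rw [Finset.mul_sum]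
  refine Finset.sum_congr rfl fun j _ => ?_
  rw [Finset.sum_comm]
  have e1 : ∀ l, ∑ a, u i * b a j * u k * b a l * S i j k l
      = (∑ a, b a j * b a l) * (u i * u k * S i j k l) := by
    intro l; rw [Finset.sum_mul]
    exact Finset.sum_congr rfl fun a _ => by ring
  simp_rw [e1, parseval b, ite_mul, one_mul, zero_mul]
  rw [Finset.sum_ite_eq]
  simp

lemma sigma_basis (S : CT n) (b : OrthonormalBasis (Fin n) ℝ (EuclideanSpace ℝ (Fin n))) :
    ∑ p, ∑ a, evR S (b p) (b a) (b p) (b a) = scalc S := by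
  simp_rw [sum_basis_pair S b]
  rw [Finset.sum_comm]
  conv_lhs => enter [2, i]; rw [Finset.sum_comm]
  have e1 : ∀ i k, ∑ p, b p i * b p k * (∑ j, S i j k j)
      = (∑ p, b p i * b p k) * (∑ j, S i j k j) := fun i k => (Finset.sum_mul _ _ _).symm
  calc ∑ i, ∑ k, ∑ p, b p i * b p k * (∑ j, S i j k j)
      = ∑ i, ∑ k, (if i = k then (1:ℝ) else 0) * (∑ j, S i j k j) := by
        refine Finset.sum_congr rfl fun i _ => Finset.sum_congr rfl fun k _ => ?_
        rw [e1, parseval]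
    _ = ∑ i, ∑ j, S i j i j := by
        refine Finset.sum_congr rfl fun i _ => ?_
        simp_rw [ite_mul, one_mul, zero_mul]
        rw [Finset.sum_ite_eq]
        simp
    _ = scalc S := by rw [scalc]; unfold Ricc; rw [Finset.sum_comm]

/-- frame with fourth vector negated is still orthonormal -/
lemma onframe_negfourth {e : Fin 4 → EuclideanSpace ℝ (Fin n)} (he : ONFrame e) :
    ONFrame ![e 0, e 1, e 2, -(e 3)] := by
  intro i j
  fin_cases i <;> fin_cases j <;>
    simp [-inner_self_eq_norm_sq_to_K, inner_neg_left, inner_neg_right, he 0 0, he 0 1, he 0 2, he 0 3, he 1 0, he 1 1,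
      he 1 2, he 1 3, he 2 0, he 2 1, he 2 2, he 2 3, he 3 0, he 3 1, he 3 2, he 3 3]

/-- Lemma A: for PIC tensors, sum of four sectional terms dominates twice |cross term|. -/
lemma lemA {S : CT n} (hPIC : WeaklyPIC S)
    {e : Fin 4 → EuclideanSpace ℝ (Fin n)} (he : ONFrame e) :
    2 * |evR S (e 0) (e 1) (e 2) (e 3)| ≤
      evR S (e 0) (e 2) (e 0) (e 2) + evR S (e 0) (e 3) (e 0) (e 3) +
      evR S (e 1) (e 2) (e 1) (e 2) + evR S (e 1) (e 3) (e 1) (e 3) := by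
  have h1 := hPIC e he
  have h2 := hPIC _ (onframe_negfourth he)
  simp only [Matrix.cons_val_zero, Matrix.cons_val_one, Matrix.head_cons,
    Matrix.cons_val_two, Matrix.tail_cons, Matrix.cons_val_three] at h2
  rw [evR_neg2, evR_neg4, evR_neg2, evR_neg4, evR_neg4] at h2
  rcases abs_cases (evR S (e 0) (e 1) (e 2) (e 3)) with ⟨h, _⟩ | ⟨h, _⟩ <;> rw [h] <;> linarith

lemma onframe_of_ite {w : Fin n → EuclideanSpace ℝ (Fin n)}
    (hw : ∀ x y, (inner ℝ (w x) (w y) : ℝ) = if x = y then 1 else 0)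
    {p q a c : Fin n} (hpq : p ≠ q) (hpa : p ≠ a) (hpc : p ≠ c) (hqa : q ≠ a) (hqc : q ≠ c)
    (hac : a ≠ c) : ONFrame ![w p, w q, w a, w c] := by
  intro i j
  fin_cases i <;> fin_cases j <;>
    simp [-inner_self_eq_norm_sq_to_K, hw, hpq, hpa, hpc, hqa, hqc, hac, hpq.symm, hpa.symm, hpc.symm, hqa.symm,
      hqc.symm, hac.symm]

lemma extend_pair (hn : 5 ≤ n) (u v : EuclideanSpace ℝ (Fin n))
    (huu : (inner ℝ u u : ℝ) = 1) (hvv : (inner ℝ v v : ℝ) = 1) (huv : (inner ℝ u v : ℝ) = 0) :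
    ∃ b : OrthonormalBasis (Fin n) ℝ (EuclideanSpace ℝ (Fin n)),
      b ⟨0, by omega⟩ = u ∧ b ⟨1, by omega⟩ = v := by
  set p0 : Fin n := ⟨0, by omega⟩
  set p1 : Fin n := ⟨1, by omega⟩
  have hp01 : p0 ≠ p1 := by simp [p0, p1, Fin.ext_iff]
  have hvu : (inner ℝ v u : ℝ) = 0 := by rw [real_inner_comm]; exact huv
  set w : Fin n → EuclideanSpace ℝ (Fin n) := fun a => if a = p0 then u else v with hw
  have horth : Orthonormal ℝ (Set.restrict {p0, p1} w) := by
    rw [orthonormal_iff_ite]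
    rintro ⟨i, hi⟩ ⟨j, hj⟩
    simp only [Set.mem_insert_iff, Set.mem_singleton_iff] at hi hj
    have hsub : (⟨i, by simp [hi]⟩ : ({p0, p1} : Set (Fin n))) = ⟨j, by simp [hj]⟩ ↔ i = j :=
      Subtype.ext_iff
    rcases hi with rfl | rfl <;> rcases hj with rfl | rfl <;>
      simp [-inner_self_eq_norm_sq_to_K, Set.restrict, hw, hp01, hp01.symm, huu, hvv, huv, hvu]
  have hcard : Module.finrank ℝ (EuclideanSpace ℝ (Fin n)) = Fintype.card (Fin n) := by
    simp
  obtain ⟨b, hb⟩ := horth.exists_orthonormalBasis_extension_of_card_eq hcard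
  exact ⟨b, hb p0 (by simp), hb p1 (by simp)⟩

section Main

variable {S : CT n} (hS : IsAlgCurv S) (hPIC : WeaklyPIC S) (hn : 5 ≤ n)

include hS hPIC hn
omit hS hn in
/-- The PIC inequality for four distinct members of an orthonormal family. -/
lemma hpic4 {w : Fin n → EuclideanSpace ℝ (Fin n)}
    (hw : ∀ x y, (inner ℝ (w x) (w y) : ℝ) = if x = y then 1 else 0)
    {p q a c : Fin n} (hpq : p ≠ q) (hpa : p ≠ a) (hpc : p ≠ c) (hqa : q ≠ a) (hqc : q ≠ c)
    (hac : a ≠ c) :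
    0 ≤ evR S (w p) (w a) (w p) (w a) + evR S (w p) (w c) (w p) (w c) +
        evR S (w q) (w a) (w q) (w a) + evR S (w q) (w c) (w q) (w c) := by
  have h := lemA hPIC (onframe_of_ite hw hpq hpa hpc hqa hqc hac)
  simp only [Matrix.cons_val_zero, Matrix.cons_val_one, Matrix.head_cons,
    Matrix.cons_val_two, Matrix.tail_cons, Matrix.cons_val_three] at h
  have habs : (0:ℝ) ≤ 2 * |evR S (w p) (w q) (w a) (w c)| := by positivity
  linarith

omit hPIC hn in
/-- `H`-facts for an orthonormal basis. -/
lemma comb_facts (b : OrthonormalBasis (Fin n) ℝ (EuclideanSpace ℝ (Fin n))) :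
    (∀ a c, evR S (b a) (b c) (b a) (b c) = evR S (b c) (b a) (b c) (b a)) ∧
    (∀ a, evR S (b a) (b a) (b a) (b a) = 0) := by
  exact ⟨fun a c => evF_sym hS.1 hS.2.1 (b c) (b a), fun a => evF_diag hS.1 (b a)⟩

lemma row_le (b : OrthonormalBasis (Fin n) ℝ (EuclideanSpace ℝ (Fin n))) (p : Fin n) :
    2 * (∑ a, evR S (b p) (b a) (b p) (b a)) ≤ scalc S := by
  obtain ⟨hsym, hdiag⟩ := comb_facts hS b
  have hb := orthonormal_iff_ite.mp b.orthonormal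
  have h := comb_row (H := fun a c => evR S (b a) (b c) (b a) (b c)) hsym hdiag
    (by simpa using hn) (fun p q a c h1 h2 h3 h4 h5 h6 => hpic4 hPIC hb h1 h2 h3 h4 h5 h6) p
  calc 2 * (∑ a, evR S (b p) (b a) (b p) (b a)) ≤ ∑ i, ∑ a, evR S (b i) (b a) (b i) (b a) := h
    _ = scalc S := sigma_basis S b

lemma scal_nonneg : 0 ≤ scalc S := by
  have b := EuclideanSpace.basisFun (Fin n) ℝ
  obtain ⟨hsym, hdiag⟩ := comb_facts hS b
  have hb := orthonormal_iff_ite.mp b.orthonormal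
  have hT : 4 ≤ (Finset.univ : Finset (Fin n)).card := by simp; omega
  have h := comb_main (H := fun a c => evR S (b a) (b c) (b a) (b c)) hsym hdiag hT
    (fun p _ q _ a _ c _ h1 h2 h3 h4 h5 h6 => hpic4 hPIC hb h1 h2 h3 h4 h5 h6)
  calc (0:ℝ) ≤ ∑ i, ∑ a, evR S (b i) (b a) (b i) (b a) := h
    _ = scalc S := sigma_basis S b

lemma F_le (u v : EuclideanSpace ℝ (Fin n))
    (huu : (inner ℝ u u : ℝ) = 1) (hvv : (inner ℝ v v : ℝ) = 1) (huv : (inner ℝ u v : ℝ) = 0) :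
    2 * evR S u v u v ≤ scalc S := by
  obtain ⟨b, hb0, hb1⟩ := extend_pair hn u v huu hvv huv
  obtain ⟨hsym, hdiag⟩ := comb_facts hS b
  have hb := orthonormal_iff_ite.mp b.orthonormal
  have hp01 : (⟨0, by omega⟩ : Fin n) ≠ ⟨1, by omega⟩ := by simp [Fin.ext_iff]
  have hstar := comb_star (H := fun a c => evR S (b a) (b c) (b a) (b c)) hsym hdiag
    (by simp; omega)
    (fun p _ q _ a _ c _ h1 h2 h3 h4 h5 h6 => hpic4 hPIC hb h1 h2 h3 h4 h5 h6)
    (Finset.mem_univ _) (Finset.mem_univ _) hp01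
  have hr0 := row_le hS hPIC hn b ⟨0, by omega⟩
  have hr1 := row_le hS hPIC hn b ⟨1, by omega⟩
  simp only [hb0, hb1] at hstar hr0 hr1
  linarith

lemma F_ge (u v : EuclideanSpace ℝ (Fin n))
    (huu : (inner ℝ u u : ℝ) = 1) (hvv : (inner ℝ v v : ℝ) = 1) (huv : (inner ℝ u v : ℝ) = 0) :
    -(3 * scalc S) ≤ 2 * evR S u v u v := by
  obtain ⟨b, hb0, hb1⟩ := extend_pair hn u v huu hvv huv
  have hb := orthonormal_iff_ite.mp b.orthonormal
  set p0 : Fin n := ⟨0, by omega⟩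
  set p1 : Fin n := ⟨1, by omega⟩
  set p2 : Fin n := ⟨2, by omega⟩
  set p3 : Fin n := ⟨3, by omega⟩
  have h := hpic4 hPIC hb (p := p0) (q := p2) (a := p1) (c := p3)
    (by simp [p0, p2, Fin.ext_iff]) (by simp [p0, p1, Fin.ext_iff])
    (by simp [p0, p3, Fin.ext_iff]) (by simp [p2, p1, Fin.ext_iff])
    (by simp [p2, p3, Fin.ext_iff]) (by simp [p1, p3, Fin.ext_iff])
  rw [hb0, hb1] at h
  have h1 : 2 * evR S u (b p3) u (b p3) ≤ scalc S := by
    have := F_le hS hPIC hn (b p0) (b p3) (by rw [hb]; simp) (by rw [hb]; simp)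
      (by rw [hb]; simp [p0, p3, Fin.ext_iff])
    rwa [hb0] at this
  have h2 : 2 * evR S (b p2) v (b p2) v ≤ scalc S := by
    have := F_le hS hPIC hn (b p2) (b p1) (by rw [hb]; simp) (by rw [hb]; simp)
      (by rw [hb]; simp [p2, p1, Fin.ext_iff])
    rwa [hb1] at this
  have h3 : 2 * evR S (b p2) (b p3) (b p2) (b p3) ≤ scalc S :=
    F_le hS hPIC hn (b p2) (b p3) (by rw [hb]; simp) (by rw [hb]; simp)
      (by rw [hb]; simp [p2, p3, Fin.ext_iff])
  linarith

omit hS hPIC hn in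
lemma sqrt2_inv_sq : ((Real.sqrt 2)⁻¹ : ℝ) * (Real.sqrt 2)⁻¹ = 1/2 := by
  rw [← mul_inv, Real.mul_self_sqrt (by norm_num)]; norm_num

def vmix (j k : Fin n) : EuclideanSpace ℝ (Fin n) := (Real.sqrt 2)⁻¹ • (E n j + E n k)

omit hS hPIC hn in
lemma inner_E_vmix (i j k : Fin n) (hij : i ≠ j) (hik : i ≠ k) :
    (inner ℝ (E n i) (vmix j k) : ℝ) = 0 := by
  rw [vmix, inner_smul_right, inner_add_right, inner_E_E, inner_E_E]
  simp [hij, hik]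

omit hS hPIC hn in
lemma inner_vmix_vmix (j k : Fin n) (hjk : j ≠ k) :
    (inner ℝ (vmix j k) (vmix j k) : ℝ) = 1 := by
  rw [vmix, inner_smul_right, inner_smul_left, inner_add_right, inner_add_left,
    inner_add_left, inner_E_E, inner_E_E, inner_E_E, inner_E_E]
  simp [hjk, hjk.symm]
  linear_combination (2:ℝ) * sqrt2_inv_sq

omit hS hPIC hn in
lemma evR_E_vmix (i j k : Fin n) :
    evR S (E n i) (vmix j k) (E n i) (vmix j k)
      = (S i j i j + S i j i k + S i k i j + S i k i k) / 2 := by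
  rw [vmix, evR_smul2, evR_smul4, evR_add2, evR_add4, evR_add4]
  simp only [evR_single]
  linear_combination (S i j i j + S i j i k + S i k i j + S i k i k) * sqrt2_inv_sq

lemma comp_F {i j : Fin n} (hij : i ≠ j) : |S i j i j| ≤ 3/2 * scalc S := by
  have h1 := F_le hS hPIC hn (E n i) (E n j) (by rw [inner_E_E]; simp) (by rw [inner_E_E]; simp)
    (by rw [inner_E_E]; simp [hij])
  have h2 := F_ge hS hPIC hn (E n i) (E n j) (by rw [inner_E_E]; simp) (by rw [inner_E_E]; simp)
    (by rw [inner_E_E]; simp [hij])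
  rw [evR_single] at h1 h2
  rw [abs_le]; constructor <;> linarith

lemma comp_D {i j k l : Fin n} (hij : i ≠ j) (hik : i ≠ k) (hil : i ≠ l) (hjk : j ≠ k)
    (hjl : j ≠ l) (hkl : k ≠ l) : |S i j k l| ≤ scalc S := by
  have h := lemA hPIC (onframe_of_ite (w := E n) inner_E_E hij hik hil hjk hjl hkl)
  simp only [Matrix.cons_val_zero, Matrix.cons_val_one, Matrix.head_cons,
    Matrix.cons_val_two, Matrix.tail_cons, Matrix.cons_val_three, evR_single] at h
  have b1 := F_le hS hPIC hn (E n i) (E n k) (by rw [inner_E_E]; simp) (by rw [inner_E_E]; simp)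
    (by rw [inner_E_E]; simp [hik])
  have b2 := F_le hS hPIC hn (E n i) (E n l) (by rw [inner_E_E]; simp) (by rw [inner_E_E]; simp)
    (by rw [inner_E_E]; simp [hil])
  have b3 := F_le hS hPIC hn (E n j) (E n k) (by rw [inner_E_E]; simp) (by rw [inner_E_E]; simp)
    (by rw [inner_E_E]; simp [hjk])
  have b4 := F_le hS hPIC hn (E n j) (E n l) (by rw [inner_E_E]; simp) (by rw [inner_E_E]; simp)
    (by rw [inner_E_E]; simp [hjl])
  rw [evR_single] at b1 b2 b3 b4
  linarith

lemma comp_A {i j k : Fin n} (hij : i ≠ j) (hik : i ≠ k) (hjk : j ≠ k) :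
    |S i j i k| ≤ 3 * scalc S := by
  have h1 := F_le hS hPIC hn (E n i) (vmix j k) (by rw [inner_E_E]; simp)
    (inner_vmix_vmix j k hjk) (inner_E_vmix i j k hij hik)
  have h2 := F_ge hS hPIC hn (E n i) (vmix j k) (by rw [inner_E_E]; simp)
    (inner_vmix_vmix j k hjk) (inner_E_vmix i j k hij hik)
  rw [evR_E_vmix] at h1 h2
  have hsym : S i k i j = S i j i k := hS.2.2.1 i j i k
  rw [hsym] at h1 h2
  have c1 := comp_F hS hPIC hn hij
  have c2 := comp_F hS hPIC hn hik
  rw [abs_le] at c1 c2 ⊢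
  constructor <;> linarith [c1.1, c1.2, c2.1, c2.2]

/-- Every component is bounded by `3 · scal`. -/
lemma comp_all (i j k l : Fin n) : |S i j k l| ≤ 3 * scalc S := by
  have hσ : 0 ≤ scalc S := scal_nonneg hS hPIC hn
  by_cases hij : i = j
  · have h0 : S i j k l = 0 := by have := hS.1 i j k l; rw [hij] at this ⊢; linarith
    rw [h0]; simpa using by linarith
  by_cases hkl : k = l
  · have h0 : S i j k l = 0 := by have := hS.2.1 i j k l; rw [hkl] at this ⊢; linarith
    rw [h0]; simpa using by linarith
  by_cases hik : i = k
  · subst hik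
    by_cases hjl : j = l
    · subst hjl
      have := comp_F hS hPIC hn hij
      linarith
    · exact comp_A hS hPIC hn hij hkl hjl
  by_cases hil : i = l
  · subst hil
    have he : S i j k i = - S i j i k := by
      have := hS.2.1 i j i k; linarith
    rw [he, abs_neg]
    by_cases hjk : j = k
    · subst hjk
      have := comp_F hS hPIC hn hij
      linarith
    · exact comp_A hS hPIC hn hij (fun h => hkl h.symm) hjk
  by_cases hjk : j = k
  · subst hjk
    have he : S i j j l = - S j i j l := by
      have := hS.1 i j j l; linarith
    rw [he, abs_neg]
    exact comp_A hS hPIC hn (Ne.symm hij) hkl hil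
  by_cases hjl : j = l
  · subst hjl
    have he : S i j k j = S j i j k := by
      have h1 := hS.1 i j k j
      have h2 := hS.2.1 j i j k
      linarith
    rw [he]
    exact comp_A hS hPIC hn (Ne.symm hij) hjk hik
  · have := comp_D hS hPIC hn hij hik hil hjk hjl hkl
    linarith

/-- Norm bound. -/
lemma norm_le_scal : ‖S‖ ≤ 3 * scalc S := by
  have hσ : 0 ≤ scalc S := scal_nonneg hS hPIC hn
  have h0 : (0:ℝ) ≤ 3 * scalc S := by linarith
  rw [pi_norm_le_iff_of_nonneg h0]; intro i
  rw [pi_norm_le_iff_of_nonneg h0]; intro j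
  rw [pi_norm_le_iff_of_nonneg h0]; intro k
  rw [pi_norm_le_iff_of_nonneg h0]; intro l
  rw [Real.norm_eq_abs]
  exact comp_all hS hPIC hn i j k l

end Main

end PicAux

/-- For `n ≥ 5`, a weakly PIC algebraic curvature tensor with vanishing
Ricci curvature vanishes.  Consequently `scal > 0` on the PIC cone away from the origin
and there is a dimensional constant `Θ(n)` with `‖S‖ ≤ Θ·scal(S)` for all weakly PIC
tensors `S`. -/
theorem pic_ricci_zero_implies_zero {n : ℕ} (hn : 5 ≤ n) (R : CT n)
    (hR : IsAlgCurv R) (hPIC : WeaklyPIC R) (hRic : ∀ j k, Ricc R j k = 0) :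
    R = 0 ∧
    (∀ S : CT n, IsAlgCurv S → WeaklyPIC S → S ≠ 0 → 0 < scalc S) ∧
    (∃ Θ : ℝ, ∀ S : CT n, IsAlgCurv S → WeaklyPIC S → ‖S‖ ≤ Θ * scalc S) := by
  have key : ∀ S : CT n, IsAlgCurv S → WeaklyPIC S → ‖S‖ ≤ 3 * scalc S ∧ 0 ≤ scalc S :=
    fun S hS hP => ⟨PicAux.norm_le_scal hS hP hn, PicAux.scal_nonneg hS hP hn⟩
  have hscal0 : scalc R = 0 := by
    unfold scalc; simp [hRic]
  have hR0 : R = 0 := by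
    have h := (key R hR hPIC).1
    rw [hscal0] at h
    exact norm_le_zero_iff.mp (by linarith)
  refine ⟨hR0, ?_, ⟨3, fun S h1 h2 => (key S h1 h2).1⟩⟩
  intro S h1 h2 hne
  rcases lt_or_eq_of_le (key S h1 h2).2 with h | h
  · exact h
  · exfalso
    apply hne
    have hb := (key S h1 h2).1
    rw [← h] at hb
    exact norm_le_zero_iff.mp (by linarith)
end
end

section
/- Let C be a closed convex cone in a finite-dimensional vector space V and let F : V → V be a continuous map that is homogeneous of degree 2 (F(aR) = a²F(R) for a > 0), together with a continuous function s : V → ℝ homogeneous of degree 1 with s > 0 on C \ {0}. If F(R) lies in the interior of the tangent cone T_R C for every R ∈ C \ {0}, then there exists θ > 0 such that F(R) − θ·s(R)²·I lies in T_R C for all R ∈ C, where I is any fixed interior point of C. -/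
/- Common definitions: algebraic curvature tensors on ℝⁿ, represented by their
components in an orthonormal frame. -/

noncomputable section
open Finset

/-- The tangent cone of a closed convex cone `C` at `R`. -/
def TConeV {V : Type*} [NormedAddCommGroup V] [InnerProductSpace ℝ V]
    (C : Set V) (R : V) : Set V :=
  {v | ∀ N : V, (∀ u ∈ C, 0 ≤ (inner ℝ u N : ℝ)) → (inner ℝ R N : ℝ) = 0 → 0 ≤ (inner ℝ v N : ℝ)}

/-- If `F` is continuous, 2-homogeneous and `F(R) ∈ int T_R C` for all
nonzero `R` in the closed convex cone `C`, `s` is continuous, 1-homogeneous and positive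
on `C \ {0}`, and `I ∈ int C`, then there is `θ > 0` with
`F(R) − θ·s(R)²·I ∈ T_R C` for all `R ∈ C`. -/
theorem uniform_interior_displacement {V : Type*} [NormedAddCommGroup V]
    [InnerProductSpace ℝ V] [FiniteDimensional ℝ V]
    (C : Set V) (hC : IsClosed C) (hconv : Convex ℝ C)
    (hcone : ∀ (a : ℝ), 0 < a → ∀ v ∈ C, a • v ∈ C)
    (F : V → V) (hFcont : Continuous F)
    (hFhom : ∀ (a : ℝ), 0 < a → ∀ v, F (a • v) = a^2 • F v)
    (s : V → ℝ) (hscont : Continuous s)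
    (hshom : ∀ (a : ℝ), 0 < a → ∀ v, s (a • v) = a * s v)
    (hspos : ∀ v ∈ C, v ≠ 0 → 0 < s v)
    (I : V) (hI : I ∈ interior C)
    (hF : ∀ v ∈ C, v ≠ 0 → F v ∈ interior (TConeV C v)) :
    ∃ θ > (0:ℝ), ∀ v ∈ C, F v - (θ * (s v)^2) • I ∈ TConeV C v := by
  classical
  -- The compact set of pairs (unit vector in C, unit outer normal at it)
  set S : Set (V × V) := {p | p.1 ∈ C ∧ ‖p.1‖ = 1 ∧ ‖p.2‖ = 1 ∧
      (∀ u ∈ C, 0 ≤ (inner ℝ u p.2 : ℝ)) ∧ (inner ℝ p.1 p.2 : ℝ) = 0} with hSdef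
  have hSclosed : IsClosed S := by
    have h1 : IsClosed {p : V × V | p.1 ∈ C} := hC.preimage continuous_fst
    have h2 : IsClosed {p : V × V | ‖p.1‖ = 1} :=
      isClosed_eq continuous_fst.norm continuous_const
    have h3 : IsClosed {p : V × V | ‖p.2‖ = 1} :=
      isClosed_eq continuous_snd.norm continuous_const
    have h4 : IsClosed {p : V × V | ∀ u ∈ C, 0 ≤ (inner ℝ u p.2 : ℝ)} := by
      have he : {p : V × V | ∀ u ∈ C, 0 ≤ (inner ℝ u p.2 : ℝ)} =
          ⋂ u ∈ C, {p : V × V | 0 ≤ (inner ℝ u p.2 : ℝ)} := by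
        ext p; simp
      rw [he]
      exact isClosed_biInter fun u _ =>
        isClosed_le continuous_const (Continuous.inner continuous_const continuous_snd)
    have h5 : IsClosed {p : V × V | (inner ℝ p.1 p.2 : ℝ) = 0} :=
      isClosed_eq (Continuous.inner continuous_fst continuous_snd) continuous_const
    exact h1.inter (h2.inter (h3.inter (h4.inter h5)))
  have hScomp : IsCompact S := by
    apply IsCompact.of_isClosed_subset
      ((isCompact_sphere (0:V) 1).prod (isCompact_sphere (0:V) 1)) hSclosed
    rintro ⟨v, N⟩ ⟨_, h2, h3, _, _⟩
    exact ⟨by simpa [mem_sphere_zero_iff_norm] using h2,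
      by simpa [mem_sphere_zero_iff_norm] using h3⟩
  -- positivity of the pairing on S
  have hpos : ∀ p ∈ S, 0 < (inner ℝ (F p.1) p.2 : ℝ) := by
    rintro ⟨v, N⟩ ⟨hvC, hvn, hNn, hNC, hNv⟩
    have hv0 : v ≠ 0 := by intro h; rw [h] at hvn; simp at hvn
    obtain ⟨δ, hδ, hball⟩ :=
      Metric.mem_nhds_iff.mp (mem_interior_iff_mem_nhds.mp (hF v hvC hv0))
    have hmem : F v - (δ/2) • N ∈ TConeV C v := by
      apply hball
      rw [Metric.mem_ball, dist_eq_norm]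
      have he : F v - (δ/2) • N - F v = -((δ/2) • N) := by abel
      rw [he, norm_neg, norm_smul, hNn, mul_one, Real.norm_eq_abs,
        abs_of_pos (by linarith : (0:ℝ) < δ/2)]
      linarith
    have h2 := hmem N hNC hNv
    rw [inner_sub_left, real_inner_smul_left, real_inner_self_eq_norm_sq, hNn] at h2
    norm_num at h2
    linarith
  -- uniform lower bound on the pairing
  have hεex : ∃ ε > (0:ℝ), ∀ p ∈ S, ε ≤ (inner ℝ (F p.1) p.2 : ℝ) := by
    rcases S.eq_empty_or_nonempty with hS | hS
    · exact ⟨1, one_pos, by simp [hS]⟩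
    · have hcont : Continuous fun p : V × V => (inner ℝ (F p.1) p.2 : ℝ) :=
        Continuous.inner (hFcont.comp continuous_fst) continuous_snd
      obtain ⟨p₀, hp₀, hmin⟩ := hScomp.exists_isMinOn hS hcont.continuousOn
      exact ⟨_, hpos p₀ hp₀, fun p hp => hmin hp⟩
  obtain ⟨ε, hε, hεS⟩ := hεex
  -- bound on s on the unit sphere part of C
  have hKcomp : IsCompact (C ∩ Metric.sphere (0:V) 1) :=
    (isCompact_sphere (0:V) 1).inter_left hC
  obtain ⟨B, hB⟩ := hKcomp.exists_bound_of_continuousOn hscont.continuousOn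
  set M : ℝ := B^2 + 1 with hMdef
  have hM0 : 0 < M := by positivity
  set θ : ℝ := ε / (M * (‖I‖ + 1)) with hθdef
  have hθ0 : 0 < θ := div_pos hε (by positivity)
  have hθε : θ * M * (‖I‖ + 1) = ε := by
    rw [hθdef]
    field_simp
  refine ⟨θ, hθ0, ?_⟩
  intro v hv
  rcases eq_or_ne v 0 with hv0 | hv0
  · subst hv0
    have h2 : F ((2:ℝ) • (0:V)) = (2:ℝ)^2 • F 0 := hFhom 2 (by norm_num) 0
    rw [smul_zero] at h2
    have hF0 : F 0 = 0 := by
      have h3 : ((2:ℝ)^2 - 1) • F 0 = 0 := by rw [sub_smul, one_smul, ← h2, sub_self]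
      rcases smul_eq_zero.mp h3 with h | h
      · norm_num at h
      · exact h
    have hs2 : s ((2:ℝ) • (0:V)) = 2 * s 0 := hshom 2 (by norm_num) 0
    rw [smul_zero] at hs2
    have hs0 : s 0 = 0 := by linarith
    rw [hF0, hs0]
    intro N _ _
    simp
  · have hvn : 0 < ‖v‖ := norm_pos_iff.mpr hv0
    set a : ℝ := ‖v‖⁻¹ with hadef
    have hapos : 0 < a := inv_pos.mpr hvn
    have hwC : a • v ∈ C := hcone a hapos v hv
    have hwn : ‖a • v‖ = 1 := by
      rw [norm_smul, Real.norm_eq_abs, abs_of_pos hapos, hadef,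
        inv_mul_cancel₀ hvn.ne']
    intro N hNC hNv
    rcases eq_or_ne N 0 with hN0 | hN0
    · simp [hN0]
    have hNn : 0 < ‖N‖ := norm_pos_iff.mpr hN0
    set b : ℝ := ‖N‖⁻¹ with hbdef
    have hbpos : 0 < b := inv_pos.mpr hNn
    have hpS : (a • v, b • N) ∈ S := by
      refine ⟨hwC, hwn, ?_, ?_, ?_⟩
      · rw [norm_smul, Real.norm_eq_abs, abs_of_pos hbpos, hbdef,
          inv_mul_cancel₀ hNn.ne']
      · intro u hu
        rw [real_inner_smul_right]
        exact mul_nonneg hbpos.le (hNC u hu)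
      · rw [real_inner_smul_left, real_inner_smul_right, hNv]
        ring
    have hmin := hεS _ hpS
    have hFw : F (a • v) = a^2 • F v := hFhom a hapos v
    have hsw : s (a • v) = a * s v := hshom a hapos v
    rw [hFw, real_inner_smul_right, real_inner_smul_left] at hmin
    -- hmin : ε ≤ b * (a^2 * ⟪F v, N⟫)
    have hwK : a • v ∈ C ∩ Metric.sphere (0:V) 1 :=
      ⟨hwC, by simpa [mem_sphere_zero_iff_norm] using hwn⟩
    have hsB := hB _ hwK
    have hM : (a * s v)^2 ≤ M := by
      rw [← hsw]
      have h1 : ‖s (a • v)‖^2 ≤ B^2 := by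
        apply pow_le_pow_left₀ (norm_nonneg _) hsB
      rw [Real.norm_eq_abs, sq_abs] at h1
      rw [hMdef]; linarith
    have hIN : 0 ≤ (inner ℝ I N : ℝ) := hNC I (interior_subset hI)
    have hINb : (inner ℝ I N : ℝ) ≤ ‖I‖ * ‖N‖ := real_inner_le_norm I N
    have hbY0 : 0 ≤ b * (inner ℝ I N : ℝ) := mul_nonneg hbpos.le hIN
    have hbY : b * (inner ℝ I N : ℝ) ≤ ‖I‖ + 1 := by
      have h1 : b * (inner ℝ I N : ℝ) ≤ b * (‖I‖ * ‖N‖) :=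
        mul_le_mul_of_nonneg_left hINb hbpos.le
      have h2 : b * (‖I‖ * ‖N‖) = ‖I‖ := by
        rw [hbdef]; field_simp
      linarith
    rw [inner_sub_left, real_inner_smul_left]
    have key : 0 ≤ (a^2 * b) *
        ((inner ℝ (F v) N : ℝ) - θ * s v ^ 2 * (inner ℝ I N : ℝ)) := by
      have expand : (a^2 * b) * ((inner ℝ (F v) N : ℝ) - θ * s v ^ 2 * (inner ℝ I N : ℝ))
          = b * (a^2 * (inner ℝ (F v) N : ℝ)) - θ * (a * s v)^2 * (b * (inner ℝ I N : ℝ)) := by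
        ring
      rw [expand]
      have h1 : θ * (a * s v)^2 * (b * (inner ℝ I N : ℝ)) ≤ θ * M * (‖I‖ + 1) := by
        apply mul_le_mul (mul_le_mul le_rfl hM (sq_nonneg _) hθ0.le) hbY hbY0
        positivity
      linarith
    nlinarith [key, mul_pos (pow_pos hapos 2) hbpos]
end
end
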